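/- arXiv:2410.20922 — 2 statements merged into one kernel-verified Lean document; each statement's English description precedes it below -/
import Mathlib

section
/- Let k, m, d, t ∈ ℕ and let Ā, B̄, U : ℝ^{k×d} × ℝ^{m×d} → ℝ^{k×d} be functions that are each left permutation equivariant (L.P.E.) and right permutation invariant (R.P.I.). Given an initial memory Z_0 ∈ ℝ^{k×d} and inputs X_1, …, X_t ∈ ℝ^{m×d}, define the linearized FACTS recurrence Z_s = Ā(Z_0, X_s) ⊙ Z_{s-1} + B̄(Z_0, X_s) ⊙ U(Z_0, X_s) for s = 1, …, t, and write FACTS(Z_0, X_{1:t}) = Z_t. Then for every permutation matrix σ_Z ∈ S_k and every sequence of permutation matrices σ_X^1, …, σ_X^t ∈ S_m, FACTS(σ_Z Z_0, [σ_X^1 X_1, …, σ_X^t X_t]) = σ_Z · FACTS(Z_0, [X_1, …, X_t]); i.e., the unrolled FACTS map is L.P.E. in the initial memory and R.P.I. in the input sequence even when each time step is permuted by a different feature permutation. -/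
open Matrix
open scoped Matrix

/-- `f` is left permutation equivariant: `f (σ Z) X = σ (f Z X)` for every
permutation matrix `σ ∈ S_k`. -/
def LPE {k m d : ℕ}
    (f : Matrix (Fin k) (Fin d) ℝ → Matrix (Fin m) (Fin d) ℝ → Matrix (Fin k) (Fin d) ℝ) :
    Prop :=
  ∀ (σ : Equiv.Perm (Fin k)) (Z : Matrix (Fin k) (Fin d) ℝ) (X : Matrix (Fin m) (Fin d) ℝ),
    f (σ.permMatrix ℝ * Z) X = σ.permMatrix ℝ * f Z X

/-- `f` is right permutation invariant: `f Z (τ X) = f Z X` for every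
permutation matrix `τ ∈ S_m`. -/
def RPI {k m d : ℕ}
    (f : Matrix (Fin k) (Fin d) ℝ → Matrix (Fin m) (Fin d) ℝ → Matrix (Fin k) (Fin d) ℝ) :
    Prop :=
  ∀ (τ : Equiv.Perm (Fin m)) (Z : Matrix (Fin k) (Fin d) ℝ) (X : Matrix (Fin m) (Fin d) ℝ),
    f Z (τ.permMatrix ℝ * X) = f Z X
/-- The linearized FACTS recurrence: `Z_0` is the initial memory and
`Z_s = Ā(Z_0, X_s) ⊙ Z_{s-1} + B̄(Z_0, X_s) ⊙ U(Z_0, X_s)` for `s ≥ 1`. -/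
def factsState {k m d : ℕ}
    (Abar Bbar U : Matrix (Fin k) (Fin d) ℝ → Matrix (Fin m) (Fin d) ℝ → Matrix (Fin k) (Fin d) ℝ)
    (Z0 : Matrix (Fin k) (Fin d) ℝ) (X : ℕ → Matrix (Fin m) (Fin d) ℝ) :
    ℕ → Matrix (Fin k) (Fin d) ℝ
  | 0 => Z0
  | s + 1 =>
      Abar Z0 (X (s + 1)) ⊙ factsState Abar Bbar U Z0 X s
        + Bbar Z0 (X (s + 1)) ⊙ U Z0 (X (s + 1))


theorem Equiv.Perm.permMatrix_mul_hadamard {m n R : Type*} [Fintype m] [DecidableEq m]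
    [Semiring R] (σ : Equiv.Perm m) (A B : Matrix m n R) :
    σ.permMatrix R * (A ⊙ B) = (σ.permMatrix R * A) ⊙ (σ.permMatrix R * B) := by
  ext i j
  simp only [Equiv.Perm.permMatrix, PEquiv.toMatrix_toPEquiv_mul, submatrix_apply,
    hadamard_apply]

theorem LPE.apply_permMatrix_mul_of_RPI {k m d : ℕ}
    {f : Matrix (Fin k) (Fin d) ℝ → Matrix (Fin m) (Fin d) ℝ → Matrix (Fin k) (Fin d) ℝ}
    (hL : LPE f) (hR : RPI f) (σ : Equiv.Perm (Fin k)) (τ : Equiv.Perm (Fin m))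
    (Z : Matrix (Fin k) (Fin d) ℝ) (X : Matrix (Fin m) (Fin d) ℝ) :
    f (σ.permMatrix ℝ * Z) (τ.permMatrix ℝ * X) = σ.permMatrix ℝ * f Z X := by
  rw [hR, hL]

theorem stmt_2 {k m d : ℕ} (t : ℕ)
    (Abar Bbar U : Matrix (Fin k) (Fin d) ℝ → Matrix (Fin m) (Fin d) ℝ → Matrix (Fin k) (Fin d) ℝ)
    (hA : LPE Abar ∧ RPI Abar) (hB : LPE Bbar ∧ RPI Bbar) (hU : LPE U ∧ RPI U)
    (Z0 : Matrix (Fin k) (Fin d) ℝ) (X : ℕ → Matrix (Fin m) (Fin d) ℝ)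
    (σZ : Equiv.Perm (Fin k)) (σX : ℕ → Equiv.Perm (Fin m)) :
    factsState Abar Bbar U (σZ.permMatrix ℝ * Z0) (fun s => (σX s).permMatrix ℝ * X s) t
      = σZ.permMatrix ℝ * factsState Abar Bbar U Z0 X t := by
  induction t with
  | zero => rfl
  | succ s ih =>
    simp only [factsState, ih, hA.1.apply_permMatrix_mul_of_RPI hA.2,
      hB.1.apply_permMatrix_mul_of_RPI hB.2, hU.1.apply_permMatrix_mul_of_RPI hU.2]
    rw [Matrix.mul_add, σZ.permMatrix_mul_hadamard, σZ.permMatrix_mul_hadamard]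
end

section
/- Let k, m, d, d' ∈ ℕ with d' > 0, let g_φ : ℝ^d → ℝ^{d'}, g_ψ : ℝ^d → ℝ^{d'}, g_φ̃ : ℝ^d → ℝ^d be arbitrary functions, and let φ, ψ, φ̃ be the corresponding row-wise maps. Define the attention router R(Z, X) = softmax(φ(Z) ψ(X)^T / √d') φ̃(X) for Z ∈ ℝ^{k×d}, X ∈ ℝ^{m×d}, with softmax applied row-wise. Then R is right permutation invariant: R(Z, τ X) = R(Z, X) for every permutation matrix τ ∈ S_m. -/
open Matrix
open scoped Matrix

/-- The row-wise map associated with `g`: it applies `g` to each row of its argument. -/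
def rowwise {n d d' : ℕ} (g : (Fin d → ℝ) → Fin d' → ℝ)
    (M : Matrix (Fin n) (Fin d) ℝ) : Matrix (Fin n) (Fin d') ℝ :=
  Matrix.of fun i => g (M i)

/-- Row-wise softmax: `softmax(M)_{ij} = exp(M_{ij}) / Σ_l exp(M_{il})`. -/
noncomputable def softmaxRow {n m : ℕ} (M : Matrix (Fin n) (Fin m) ℝ) : Matrix (Fin n) (Fin m) ℝ :=
  Matrix.of fun i j => Real.exp (M i j) / ∑ l, Real.exp (M i l)

/-- The attention router `R(Z, X) = softmax(φ(Z) ψ(X)ᵀ / √d') φ̃(X)`, where `φ, ψ, φ̃`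
are the row-wise maps associated with `gφ, gψ, gφ'`. -/
noncomputable def router {k m d d' : ℕ} (gφ gψ : (Fin d → ℝ) → Fin d' → ℝ) (gφ' : (Fin d → ℝ) → Fin d → ℝ)
    (Z : Matrix (Fin k) (Fin d) ℝ) (X : Matrix (Fin m) (Fin d) ℝ) :
    Matrix (Fin k) (Fin d) ℝ :=
  softmaxRow ((Real.sqrt d')⁻¹ • (rowwise gφ Z * (rowwise gψ X)ᵀ)) * rowwise gφ' X

/-!
Permuting the rows of `X` by `τ` permutes the rows of `ψ(X)` and `φ̃(X)` by `τ`, hence the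
columns of the score matrix `φ(Z) ψ(X)ᵀ / √d'`. Row-wise softmax commutes with column
permutations, and the column permutation of the attention weights cancels against the row
permutation of the values `φ̃(X)`.
-/

lemma rowwise_submatrix {n n' d d' : ℕ} (g : (Fin d → ℝ) → Fin d' → ℝ)
    (M : Matrix (Fin n) (Fin d) ℝ) (r : Fin n' → Fin n) :
    rowwise g (M.submatrix r id) = (rowwise g M).submatrix r id :=
  rfl

lemma softmaxRow_submatrix {n n' m m' : ℕ} (M : Matrix (Fin n) (Fin m) ℝ) (r : Fin n' → Fin n)
    (σ : Fin m' ≃ Fin m) :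
    softmaxRow (M.submatrix r σ) = (softmaxRow M).submatrix r σ := by
  ext i j
  simp only [softmaxRow, submatrix_apply, of_apply, Equiv.sum_comp σ (fun l => Real.exp (M (r i) l))]

lemma smul_submatrix {R α l m n o : Type*} [SMul R α] (c : R) (A : Matrix m n α) (r : l → m)
    (s : o → n) : c • A.submatrix r s = (c • A).submatrix r s :=
  rfl

lemma mul_transpose_submatrix_id {α l m n o : Type*} [Fintype n] [Mul α] [AddCommMonoid α]
    (A : Matrix l n α) (B : Matrix m n α) (r : o → m) :
    A * (B.submatrix r id)ᵀ = (A * Bᵀ).submatrix id r := by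
  rw [transpose_submatrix, submatrix_mul _ _ id id r Function.bijective_id, submatrix_id_id]

theorem router_submatrix_perm {k m d d' : ℕ} (gφ gψ : (Fin d → ℝ) → Fin d' → ℝ)
    (gφ' : (Fin d → ℝ) → Fin d → ℝ) (τ : Equiv.Perm (Fin m))
    (Z : Matrix (Fin k) (Fin d) ℝ) (X : Matrix (Fin m) (Fin d) ℝ) :
    router gφ gψ gφ' Z (X.submatrix τ id) = router gφ gψ gφ' Z X := by
  rw [router, rowwise_submatrix, rowwise_submatrix, mul_transpose_submatrix_id, smul_submatrix,
    softmaxRow_submatrix, submatrix_mul_equiv, submatrix_id_id, router]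

theorem stmt_4_general {k m d d' : ℕ}
    (gφ gψ : (Fin d → ℝ) → Fin d' → ℝ) (gφ' : (Fin d → ℝ) → Fin d → ℝ)
    (τ : Equiv.Perm (Fin m))
    (Z : Matrix (Fin k) (Fin d) ℝ) (X : Matrix (Fin m) (Fin d) ℝ) :
    router gφ gψ gφ' Z (τ.permMatrix ℝ * X) = router gφ gψ gφ' Z X := by
  rw [Equiv.Perm.permMatrix, PEquiv.toMatrix_toPEquiv_mul]
  exact router_submatrix_perm gφ gψ gφ' τ Z X

theorem stmt_4 {k m d d' : ℕ} (hd' : 0 < d')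
    (gφ gψ : (Fin d → ℝ) → Fin d' → ℝ) (gφ' : (Fin d → ℝ) → Fin d → ℝ)
    (τ : Equiv.Perm (Fin m))
    (Z : Matrix (Fin k) (Fin d) ℝ) (X : Matrix (Fin m) (Fin d) ℝ) :
    router gφ gψ gφ' Z (τ.permMatrix ℝ * X) = router gφ gψ gφ' Z X :=
  stmt_4_general gφ gψ gφ' τ Z X
end
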